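/- Every permutation π of size at least 1 can be expressed as a direct sum π = π₁⊕⋯⊕πₙ of Lyndon permutations satisfying π₁ ≥_L π₂ ≥_L ⋯ ≥_L πₙ, and this ordered tuple (π₁, …, πₙ) is unique. -/

import Mathlib

/-!
Splitting off a summand at each prefix `[0, a)` that a permutation maps into itself shows that
every permutation is the direct sum of a unique word of indecomposable blocks; since an
indecomposable block has no such proper prefix, two block words with the same sum agree. So
`⊕` turns into concatenation of words over `Σ`, Lyndon permutations and `≥_L` into Lyndon words
and the lexicographic order, and the theorem becomes the Chen–Fox–Lyndon factorization of the
word of blocks. It exists because two Lyndon words `u < v` concatenate to a Lyndon word `uv`, and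
it is unique because a Lyndon prefix of a nonincreasing product of Lyndon words is no longer than
its first factor.
-/

open Equiv MeasureTheory

/-- A permutation of size `n` together with its size. -/
abbrev PermSig := Σ n : ℕ, Equiv.Perm (Fin n)

/-- The direct sum of two permutations. -/
def permDirectSum {m n : ℕ} (π₁ : Equiv.Perm (Fin m)) (π₂ : Equiv.Perm (Fin n)) :
    Equiv.Perm (Fin (m + n)) :=
  Equiv.permCongr finSumFinEquiv (Equiv.sumCongr π₁ π₂)

def sigSum (p q : PermSig) : PermSig := ⟨p.1 + q.1, permDirectSum p.2 q.2⟩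

/-- Direct sum of a list of permutations. -/
def sigSumList : List PermSig → PermSig
  | [] => ⟨0, 1⟩
  | [p] => p
  | p :: q :: l => sigSum p (sigSumList (q :: l))

/-- A permutation is decomposable if it is a direct sum of two permutations
(each of size at least `1`). -/
def IsDecomposable {n : ℕ} (π : Equiv.Perm (Fin n)) : Prop :=
  ∃ (a b : ℕ) (_ : 0 < a) (_ : 0 < b) (h : a + b = n)
    (π₁ : Equiv.Perm (Fin a)) (π₂ : Equiv.Perm (Fin b)),
    π = Equiv.permCongr (finCongr h) (permDirectSum π₁ π₂)

def IsIndecomposable {n : ℕ} (π : Equiv.Perm (Fin n)) : Prop :=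
  1 ≤ n ∧ ¬ IsDecomposable π

/-- The alphabet `Σ` of indecomposable permutations. -/
def Indec : Type := {p : PermSig // IsIndecomposable p.2}

/-- `l` is the word of indecomposable blocks of `π`. -/
def IsBlockDecomposition {n : ℕ} (π : Equiv.Perm (Fin n)) (l : List Indec) : Prop :=
  sigSumList (l.map Subtype.val) = ⟨n, π⟩

/-- The sequence of values of a permutation. -/
def permWord {n : ℕ} (π : Equiv.Perm (Fin n)) : List ℕ :=
  (List.finRange n).map fun i => (π i : ℕ)

/-- The order on the alphabet of indecomposable permutations: smaller sizes first,
permutations of the same size ordered lexicographically as sequences of values. -/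
def sigLt (p q : PermSig) : Prop :=
  p.1 < q.1 ∨ (p.1 = q.1 ∧ List.Lex (· < ·) (permWord p.2) (permWord q.2))

def indecLt (p q : Indec) : Prop := sigLt p.1 q.1

/-- A nonempty word is Lyndon if no proper nonempty suffix of it is smaller
(w.r.t. the lexicographic order induced by `r`) than the word itself. -/
def IsLyndonWord {α : Type*} (r : α → α → Prop) (w : List α) : Prop :=
  w ≠ [] ∧ ∀ i, 0 < i → i < w.length → ¬ List.Lex r (w.drop i) w

/-- A permutation is Lyndon w.r.t. an order `r` on indecomposable permutations
if its word of indecomposable blocks is a Lyndon word. -/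
def IsLyndonPermWrt (r : Indec → Indec → Prop) {n : ℕ} (π : Equiv.Perm (Fin n)) : Prop :=
  ∃ l : List Indec, IsBlockDecomposition π l ∧ IsLyndonWord r l

def IsLyndonPerm {n : ℕ} (π : Equiv.Perm (Fin n)) : Prop := IsLyndonPermWrt indecLt π

/-- `π <_L π'`: the word of blocks of `π` is lexicographically smaller than that of `π'`. -/
def permLtL (p q : PermSig) : Prop :=
  ∃ lp lq : List Indec, IsBlockDecomposition p.2 lp ∧ IsBlockDecomposition q.2 lq ∧
    List.Lex indecLt lp lq

def permLeL (p q : PermSig) : Prop :=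
  ∃ lp lq : List Indec, IsBlockDecomposition p.2 lp ∧ IsBlockDecomposition q.2 lq ∧
    (lp = lq ∨ List.Lex indecLt lp lq)

/-- The pattern induced by the set `S` in `σ` is `τ`. -/
def IsPatternOf {N m : ℕ} (σ : Equiv.Perm (Fin N)) (S : Finset (Fin N))
    (τ : Equiv.Perm (Fin m)) : Prop :=
  ∃ h : S.card = m, ∀ i j : Fin m,
    τ i < τ j ↔ σ (S.orderEmbOfFin h i) < σ (S.orderEmbOfFin h j)

/-- A permuton is a Borel probability measure on `[0,1]²` with uniform marginals. -/
structure Permuton where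
  μ : Measure (ℝ × ℝ)
  prob : IsProbabilityMeasure μ
  marg_fst : ∀ a b : ℝ, 0 ≤ a → a ≤ b → b ≤ 1 →
    μ (Set.Icc a b ×ˢ Set.Icc (0:ℝ) 1) = ENNReal.ofReal (b - a)
  marg_snd : ∀ a b : ℝ, 0 ≤ a → a ≤ b → b ≤ 1 →
    μ (Set.Icc (0:ℝ) 1 ×ˢ Set.Icc a b) = ENNReal.ofReal (b - a)

/-- The density of a pattern `σ` in a permuton `P`: the probability that `n` points
sampled independently from `P`, sorted by their first coordinates, have their second
coordinates ordered according to `σ`. -/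
noncomputable def permutonDensity {n : ℕ} (σ : Equiv.Perm (Fin n)) (P : Permuton) : ℝ :=
  haveI := P.prob
  ((Measure.pi fun _ : Fin n => P.μ)
    {p : Fin n → ℝ × ℝ | ∃ e : Equiv.Perm (Fin n),
      (∀ i j : Fin n, i < j → (p (e i)).1 < (p (e j)).1) ∧
      (∀ i j : Fin n, σ i < σ j ↔ (p (e i)).2 < (p (e j)).2)}).toReal


section LyndonWord

variable {α : Type*} [LinearOrder α]

namespace List

theorem append_lt_append_of_lt_of_not_prefix {u v : List α} (h : u < v) (hp : ¬u <+: v)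
    (x y : List α) : u ++ x < v ++ y := by
  induction h with
  | nil => exact absurd nil_prefix hp
  | @cons a u v _ ih =>
    exact Lex.cons (ih (fun h => hp (cons_prefix_cons.mpr ⟨rfl, h⟩)))
  | rel h => exact Lex.rel h

end List

open List

theorem isLyndonWord_singleton (a : α) : IsLyndonWord (· < ·) [a] :=
  ⟨cons_ne_nil a [], fun i hi0 hi => by simp only [length_singleton] at hi; omega⟩

namespace IsLyndonWord

variable {u v w : List α}

theorem lt_drop (hw : IsLyndonWord (· < ·) w) {i : ℕ} (hi0 : 0 < i) (hi : i < w.length) :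
    w < w.drop i :=
  lt_of_le_of_ne (not_lt.mp (hw.2 i hi0 hi)) fun h => by
    have := congrArg length h
    simp only [length_drop] at this
    omega

theorem append_lt (hv : IsLyndonWord (· < ·) v) (hu : u ≠ []) (h : u < v) : u ++ v < v := by
  by_cases hp : u <+: v
  · obtain ⟨t, rfl⟩ := hp
    have ht : t ≠ [] := by
      rintro rfl
      simp at h
    have hlen := length_pos_iff.mpr ht
    have := hv.lt_drop (length_pos_iff.mpr hu) (by rw [length_append]; omega)
    rw [drop_left] at this
    exact append_left_lt this
  · simpa using append_lt_append_of_lt_of_not_prefix h hp v []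

/-- Every proper suffix of `u ++ v` is `u.drop i ++ v`, `v`, or a proper suffix of `v`, and each
of them is larger than `u ++ v`. -/
theorem append (hu : IsLyndonWord (· < ·) u) (hv : IsLyndonWord (· < ·) v) (h : u < v) :
    IsLyndonWord (· < ·) (u ++ v) := by
  refine ⟨by simp [hu.1], fun i hi0 hi => ?_⟩
  change ¬drop i (u ++ v) < u ++ v
  refine not_lt.mpr (le_of_lt ?_)
  have huv : u ++ v < v := hv.append_lt hu.1 h
  rw [drop_append]
  rcases lt_trichotomy i u.length with hlt | rfl | hgt
  · rw [Nat.sub_eq_zero_of_le hlt.le, drop_zero]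
    refine append_lt_append_of_lt_of_not_prefix (hu.lt_drop hi0 hlt) (fun hp => ?_) v v
    have := hp.length_le
    simp only [length_drop] at this
    omega
  · simpa using huv
  · rw [drop_eq_nil_of_le hgt.le, nil_append]
    simp only [length_append] at hi
    exact huv.trans (hv.lt_drop (by omega) (by omega))

end IsLyndonWord

def IsLyndonFactorization (F : List (List α)) : Prop :=
  (∀ u ∈ F, IsLyndonWord (· < ·) u) ∧ F.IsChain (· ≥ ·)

theorem IsLyndonFactorization.nil : IsLyndonFactorization ([] : List (List α)) :=
  ⟨by simp, isChain_nil⟩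

theorem IsLyndonFactorization.of_cons {u : List α} {F : List (List α)}
    (h : IsLyndonFactorization (u :: F)) : IsLyndonFactorization F :=
  ⟨fun v hv => h.1 v (mem_cons_of_mem u hv), h.2.tail⟩

theorem IsLyndonFactorization.isLyndonWord_head {u : List α} {F : List (List α)}
    (h : IsLyndonFactorization (u :: F)) : IsLyndonWord (· < ·) u :=
  h.1 u mem_cons_self

theorem IsLyndonFactorization.le_head {u : List α} {F : List (List α)}
    (h : IsLyndonFactorization (u :: F)) : ∀ v ∈ F, v ≤ u :=
  fun _ hv => (pairwise_cons.mp (isChain_iff_pairwise.mp h.2)).1 _ hv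

/-- `u` absorbs the leading factors larger than it. -/
theorem exists_isLyndonFactorization_append {u : List α} (hu : IsLyndonWord (· < ·) u)
    {F : List (List α)} (hF : IsLyndonFactorization F) :
    ∃ G, IsLyndonFactorization G ∧ G.flatten = u ++ F.flatten := by
  induction F generalizing u with
  | nil => exact ⟨[u], ⟨by simpa using hu, isChain_singleton u⟩, by simp⟩
  | cons v F ih =>
    by_cases hvu : v ≤ u
    · refine ⟨u :: v :: F, ⟨?_, isChain_cons_cons.mpr ⟨hvu, hF.2⟩⟩, rfl⟩
      rintro w (_ | ⟨_, hw⟩)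
      exacts [hu, hF.1 w hw]
    · obtain ⟨G, hG, hGF⟩ := ih (hu.append hF.isLyndonWord_head (not_le.mp hvu)) hF.of_cons
      exact ⟨G, hG, by simp [hGF]⟩

theorem exists_isLyndonFactorization (w : List α) :
    ∃ F, IsLyndonFactorization F ∧ F.flatten = w := by
  induction w with
  | nil => exact ⟨[], .nil, rfl⟩
  | cons a w ih =>
    obtain ⟨F, hF, rfl⟩ := ih
    exact exists_isLyndonFactorization_append (isLyndonWord_singleton a) hF

theorem List.exists_suffix_le_of_prefix_flatten {v t : List α} {G : List (List α)}
    (hG : ∀ g ∈ G, g ≤ v) (ht : t ≠ []) (htG : t <+: G.flatten) :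
    ∃ s, s ≠ [] ∧ s <:+ t ∧ s ≤ v := by
  induction G generalizing t with
  | nil => exact absurd (prefix_nil.mp htG) ht
  | cons g G ih =>
    rw [flatten_cons] at htG
    rcases le_or_gt t.length g.length with hle | hlt
    · have htg : t <+: g := prefix_of_prefix_length_le htG (prefix_append g _) hle
      exact ⟨t, ht, suffix_refl t, (not_lt.mp htg.le).trans (hG g mem_cons_self)⟩
    · obtain ⟨t', rfl⟩ := prefix_of_prefix_length_le (prefix_append g _) htG hlt.le
      obtain ⟨s, hs, hst, hsv⟩ := ih (fun g hg => hG g (mem_cons_of_mem _ hg))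
        (by rintro rfl; simp at hlt) ((prefix_append_right_inj g).mp htG)
      exact ⟨s, hs, hst.trans (suffix_append g t'), hsv⟩

/-- Otherwise `u = v ++ t` with `t` a prefix of `G.flatten`, and a nonempty suffix `s ≤ v` of `t`
would be a proper suffix of `u` with `s ≤ v < u`. -/
theorem IsLyndonFactorization.length_le_of_prefix {u v : List α} {G : List (List α)}
    (hF : IsLyndonFactorization (v :: G)) (hu : IsLyndonWord (· < ·) u)
    (huv : u <+: v ++ G.flatten) : u.length ≤ v.length := by
  by_contra! hlt
  obtain ⟨t, rfl⟩ := prefix_of_prefix_length_le (prefix_append v _) huv hlt.le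
  have ht : t ≠ [] := by rintro rfl; simp at hlt
  obtain ⟨s, hs, ⟨r, rfl⟩, hsv⟩ := exists_suffix_le_of_prefix_flatten hF.le_head ht
    ((prefix_append_right_inj v).mp (by simpa using huv))
  have hv := length_pos_iff.mpr hF.isLyndonWord_head.1
  have hs := length_pos_iff.mpr hs
  have hus : v ++ (r ++ s) < s := by
    simpa [← append_assoc] using hu.lt_drop (i := v.length + r.length) (by omega)
      (by simp only [length_append]; omega)
  have hvu : v < v ++ (r ++ s) :=
    lt_of_le_of_ne (not_lt.mp (prefix_append v _).le) fun h => by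
      have := congrArg length h
      simp only [length_append] at this
      omega
  exact lt_irrefl _ (hus.trans_le (hsv.trans hvu.le))

theorem IsLyndonFactorization.eq_of_flatten_eq {F G : List (List α)} (hF : IsLyndonFactorization F)
    (hG : IsLyndonFactorization G) (h : F.flatten = G.flatten) : F = G := by
  induction F generalizing G with
  | nil =>
    cases G with
    | nil => rfl
    | cons v G => simp [hG.isLyndonWord_head.1] at h
  | cons u F ih =>
    cases G with
    | nil => simp [hF.isLyndonWord_head.1] at h
    | cons v G =>
      rw [flatten_cons, flatten_cons] at h
      have hlen : u.length = v.length := le_antisymm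
        (hG.length_le_of_prefix hF.isLyndonWord_head (h ▸ prefix_append u _))
        (hF.length_le_of_prefix hG.isLyndonWord_head (h ▸ prefix_append v _))
      obtain rfl : u = v := append_inj_left h hlen
      rw [ih hF.of_cons hG.of_cons (append_cancel_left h)]

theorem existsUnique_isLyndonFactorization (w : List α) :
    ∃! F, IsLyndonFactorization F ∧ F.flatten = w := by
  obtain ⟨F, hF, hFw⟩ := exists_isLyndonFactorization w
  exact ⟨F, ⟨hF, hFw⟩, fun G ⟨hG, hGw⟩ => hG.eq_of_flatten_eq hF (hGw.trans hFw.symm)⟩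

end LyndonWord

theorem permDirectSum_castAdd {m n : ℕ} (σ : Perm (Fin m)) (τ : Perm (Fin n)) (i : Fin m) :
    permDirectSum σ τ (Fin.castAdd n i) = Fin.castAdd n (σ i) := by
  simp [permDirectSum]

theorem permDirectSum_natAdd {m n : ℕ} (σ : Perm (Fin m)) (τ : Perm (Fin n)) (i : Fin n) :
    permDirectSum σ τ (Fin.natAdd m i) = Fin.natAdd m (τ i) := by
  simp [permDirectSum]

namespace PermSig

/-- Through `natFun`, equalities of permutations of possibly different sizes become equalities of
functions `ℕ → ℕ`, with no transport along equalities of sizes. -/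
def natFun (p : PermSig) (i : ℕ) : ℕ := if h : i < p.1 then p.2 ⟨i, h⟩ else i

theorem natFun_mk {n : ℕ} (π : Perm (Fin n)) {i : ℕ} (h : i < n) :
    natFun ⟨n, π⟩ i = π ⟨i, h⟩ :=
  dif_pos h

theorem natFun_lt (p : PermSig) {i : ℕ} (h : i < p.1) : p.natFun i < p.1 := by
  simp [natFun, h]

theorem natFun_of_le (p : PermSig) {i : ℕ} (h : p.1 ≤ i) : p.natFun i = i := by
  simp [natFun, not_lt.mpr h]

theorem natFun_injOn (p : PermSig) : Set.InjOn p.natFun (Set.Iio p.1) := by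
  intro i (hi : i < p.1) j (hj : j < p.1) h
  simpa [natFun, hi, hj, Fin.val_inj] using h

theorem ext_natFun {p q : PermSig} (h₁ : p.1 = q.1)
    (h₂ : ∀ i < p.1, p.natFun i = q.natFun i) : p = q := by
  obtain ⟨n, π⟩ := p
  obtain ⟨m, σ⟩ := q
  obtain rfl : n = m := h₁
  congr
  ext i
  simpa [natFun_mk _ i.2] using h₂ i i.2

theorem fst_sigSum (p q : PermSig) : (sigSum p q).1 = p.1 + q.1 := rfl

theorem natFun_sigSum_of_lt (p q : PermSig) {i : ℕ} (h : i < p.1) :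
    (sigSum p q).natFun i = p.natFun i := by
  obtain ⟨m, σ⟩ := p
  obtain ⟨n, τ⟩ := q
  rw [natFun_mk _ h, sigSum, natFun_mk _ (Nat.lt_add_right n h)]
  exact congrArg Fin.val (permDirectSum_castAdd σ τ ⟨i, h⟩)

theorem natFun_sigSum_add (p q : PermSig) (j : ℕ) :
    (sigSum p q).natFun (p.1 + j) = p.1 + q.natFun j := by
  obtain ⟨m, σ⟩ := p
  obtain ⟨n, τ⟩ := q
  rcases lt_or_ge j n with h | h
  · rw [natFun_mk _ h, sigSum, natFun_mk _ (Nat.add_lt_add_left h m)]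
    exact congrArg Fin.val (permDirectSum_natAdd σ τ ⟨j, h⟩)
  · rw [natFun_of_le ⟨n, τ⟩ h, natFun_of_le (sigSum _ _) (Nat.add_le_add_left h m)]

theorem natFun_sigSum (p q : PermSig) (i : ℕ) :
    (sigSum p q).natFun i = if i < p.1 then p.natFun i else p.1 + q.natFun (i - p.1) := by
  split_ifs with h
  · exact natFun_sigSum_of_lt p q h
  · obtain ⟨j, rfl⟩ := Nat.exists_eq_add_of_le (not_lt.mp h)
    simp [natFun_sigSum_add]

theorem sigSum_assoc (p q r : PermSig) : sigSum (sigSum p q) r = sigSum p (sigSum q r) :=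
  ext_natFun (Nat.add_assoc _ _ _) fun i _ => by
    simp only [natFun_sigSum, fst_sigSum, Nat.sub_sub]
    split_ifs <;> omega

theorem sigSum_zero_left (p : PermSig) : sigSum ⟨0, 1⟩ p = p :=
  ext_natFun (Nat.zero_add _) fun _ _ => by simp [natFun_sigSum]

theorem sigSum_zero_right (p : PermSig) : sigSum p ⟨0, 1⟩ = p :=
  ext_natFun (Nat.add_zero _) fun _ hi => natFun_sigSum_of_lt p _ hi

theorem sigSum_inj {p q p' q' : PermSig} (h : sigSum p q = sigSum p' q') (hfst : p.1 = p'.1) :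
    p = p' ∧ q = q' := by
  have hq : q.1 = q'.1 := by
    have := congrArg Sigma.fst h
    simp only [fst_sigSum] at this
    omega
  refine ⟨ext_natFun hfst fun i hi => ?_, ext_natFun hq fun i _ => ?_⟩
  · simpa [natFun_sigSum_of_lt _ _ hi, natFun_sigSum_of_lt _ _ (hfst ▸ hi)] using
      congrArg (natFun · i) h
  · have := congrArg (natFun · (p.1 + i)) h
    simp only [natFun_sigSum_add] at this
    rw [hfst, natFun_sigSum_add] at this
    omega

end PermSig

open PermSig

theorem sigSumList_cons (p : PermSig) (l : List PermSig) :
    sigSumList (p :: l) = sigSum p (sigSumList l) := by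
  cases l with
  | nil => exact (sigSum_zero_right p).symm
  | cons q l => rfl

noncomputable def permOfInjOn (n : ℕ) (f : ℕ → ℕ) (hf : ∀ i < n, f i < n)
    (hinj : Set.InjOn f (Set.Iio n)) : Perm (Fin n) :=
  Equiv.ofBijective (fun i => ⟨f i, hf i i.2⟩) <| Finite.injective_iff_bijective.mp
    fun i j h => Fin.ext (hinj i.2 j.2 (congrArg Fin.val h))

theorem natFun_permOfInjOn {n : ℕ} {f : ℕ → ℕ} (hf : ∀ i < n, f i < n)
    (hinj : Set.InjOn f (Set.Iio n)) {i : ℕ} (hi : i < n) :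
    natFun ⟨n, permOfInjOn n f hf hinj⟩ i = f i := by
  simp [natFun_mk _ hi, permOfInjOn]

theorem exists_sigSum_eq_of_mapsTo {p : PermSig} {a : ℕ} (ha : a ≤ p.1)
    (hmaps : ∀ i < a, p.natFun i < a) : ∃ q r : PermSig, q.1 = a ∧ sigSum q r = p := by
  have hinj := p.natFun_injOn
  let σ := permOfInjOn a p.natFun hmaps (hinj.mono (Set.Iio_subset_Iio ha))
  -- `σ` is onto `[0, a)`, so `p` maps `[a, p.1)` into `[a, p.1)`
  have hge : ∀ j, a ≤ j → j < p.1 → a ≤ p.natFun j := by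
    intro j hj hjp
    by_contra! hlt
    obtain ⟨i, hi⟩ := σ.surjective ⟨_, hlt⟩
    have hia : (i : ℕ) < a := i.2
    have hij : p.natFun i = p.natFun j := by simpa [σ, permOfInjOn] using congrArg Fin.val hi
    have := hinj (show (i : ℕ) < p.1 by omega) hjp hij
    omega
  have hmaps' : ∀ j < p.1 - a, p.natFun (a + j) - a < p.1 - a := fun j hj => by
    have := p.natFun_lt (show a + j < p.1 by omega)
    omega
  have hinj' : Set.InjOn (fun j => p.natFun (a + j) - a) (Set.Iio (p.1 - a)) :=
    fun i (hi : i < p.1 - a) j (hj : j < p.1 - a) h => by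
      have := hge (a + i) (by omega) (by omega)
      have := hge (a + j) (by omega) (by omega)
      have := hinj (show a + i < p.1 by omega) (show a + j < p.1 by omega) (by simp only at h; omega)
      omega
  refine ⟨⟨a, σ⟩, ⟨p.1 - a, permOfInjOn _ _ hmaps' hinj'⟩, rfl,
    ext_natFun (Nat.add_sub_cancel' ha) fun i hi => ?_⟩
  simp only [fst_sigSum] at hi
  rw [natFun_sigSum]
  split_ifs with h
  · exact natFun_permOfInjOn _ _ h
  · have := hge i (not_lt.mp h) (by omega)
    rw [natFun_permOfInjOn _ _ (by simp only at h ⊢; omega)]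
    simp only at h ⊢
    rw [Nat.add_sub_cancel' (not_lt.mp h)]
    omega

theorem sigma_mk_eq_mk_iff {m n : ℕ} (h : m = n) (σ : Perm (Fin m)) (π : Perm (Fin n)) :
    (⟨m, σ⟩ : PermSig) = ⟨n, π⟩ ↔ π = permCongr (finCongr h) σ := by
  subst h
  simp only [Sigma.mk.injEq, heq_eq_eq, true_and]
  exact ⟨fun h => by ext; simp [h], fun h => by ext; simp [h]⟩

theorem isDecomposable_iff_exists_sigSum {n : ℕ} (π : Perm (Fin n)) :
    IsDecomposable π ↔ ∃ q r : PermSig, 0 < q.1 ∧ 0 < r.1 ∧ sigSum q r = ⟨n, π⟩ := by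
  constructor
  · rintro ⟨a, b, ha, hb, h, π₁, π₂, hπ⟩
    exact ⟨⟨a, π₁⟩, ⟨b, π₂⟩, ha, hb, (sigma_mk_eq_mk_iff h _ _).mpr hπ⟩
  · rintro ⟨⟨a, π₁⟩, ⟨b, π₂⟩, ha, hb, hs⟩
    have h : a + b = n := congrArg Sigma.fst hs
    exact ⟨a, b, ha, hb, h, π₁, π₂, (sigma_mk_eq_mk_iff h _ _).mp hs⟩

theorem IsIndecomposable.not_mapsTo {p : PermSig} (hp : IsIndecomposable p.2) {a : ℕ}
    (ha : 0 < a) (hap : a < p.1) : ¬∀ i < a, p.natFun i < a := fun hmaps => by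
  obtain ⟨q, r, rfl, hqr⟩ := exists_sigSum_eq_of_mapsTo hap.le hmaps
  have : q.1 + r.1 = p.1 := congrArg Sigma.fst hqr
  exact hp.2 ((isDecomposable_iff_exists_sigSum p.2).mpr ⟨q, r, ha, by omega, hqr⟩)

theorem IsIndecomposable.fst_le_of_sigSum_eq {p q S T : PermSig} (hp : IsIndecomposable p.2)
    (hq : 0 < q.1) (h : sigSum p S = sigSum q T) : p.1 ≤ q.1 := by
  by_contra! hlt
  refine hp.not_mapsTo hq hlt fun i hi => ?_
  have := congrArg (natFun · i) h
  simp only [natFun_sigSum_of_lt _ _ (hi.trans hlt), natFun_sigSum_of_lt _ _ hi] at this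
  exact this ▸ q.natFun_lt hi

def blockSum (l : List Indec) : PermSig := sigSumList (l.map Subtype.val)

theorem blockSum_nil : blockSum [] = ⟨0, 1⟩ := rfl

theorem blockSum_cons (p : Indec) (l : List Indec) :
    blockSum (p :: l) = sigSum p.1 (blockSum l) :=
  sigSumList_cons _ _

theorem blockSum_append (l₁ l₂ : List Indec) :
    blockSum (l₁ ++ l₂) = sigSum (blockSum l₁) (blockSum l₂) := by
  induction l₁ with
  | nil => exact (sigSum_zero_left _).symm
  | cons p l₁ ih => rw [List.cons_append, blockSum_cons, ih, blockSum_cons, sigSum_assoc]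

theorem blockSum_flatten (G : List (List Indec)) :
    blockSum G.flatten = sigSumList (G.map blockSum) := by
  induction G with
  | nil => rfl
  | cons l G ih => rw [List.flatten_cons, blockSum_append, ih, List.map_cons, sigSumList_cons]

theorem blockSum_cons_ne_nil (p : Indec) (l : List Indec) : blockSum (p :: l) ≠ ⟨0, 1⟩ := by
  intro h
  have hsize : p.1.1 + (blockSum l).1 = 0 := by rw [← fst_sigSum, ← blockSum_cons, h]
  have := p.2.1
  omega

theorem blockSum_surjective : Function.Surjective blockSum := by
  suffices ∀ n (π : Perm (Fin n)), ∃ l, blockSum l = ⟨n, π⟩ from fun p => this p.1 p.2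
  intro n
  induction n using Nat.strong_induction_on with
  | _ n ih =>
  intro π
  rcases Nat.eq_zero_or_pos n with rfl | hn
  · exact ⟨[], by rw [blockSum_nil, Subsingleton.elim π 1]⟩
  by_cases hπ : IsDecomposable π
  · obtain ⟨q, r, hq, hr, hqr⟩ := (isDecomposable_iff_exists_sigSum π).mp hπ
    have hsize : q.1 + r.1 = n := congrArg Sigma.fst hqr
    obtain ⟨lq, hlq⟩ := ih q.1 (by omega) q.2
    obtain ⟨lr, hlr⟩ := ih r.1 (by omega) r.2
    exact ⟨lq ++ lr, by rw [blockSum_append, hlq, hlr, hqr]⟩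
  · exact ⟨[⟨⟨n, π⟩, hn, hπ⟩], rfl⟩

theorem blockSum_injective : Function.Injective blockSum := by
  intro l₁ l₂ h
  induction l₁ generalizing l₂ with
  | nil =>
    cases l₂ with
    | nil => rfl
    | cons q l₂ => exact absurd h.symm (blockSum_cons_ne_nil q l₂)
  | cons p l₁ ih =>
    cases l₂ with
    | nil => exact absurd h (blockSum_cons_ne_nil p l₁)
    | cons q l₂ =>
      rw [blockSum_cons, blockSum_cons] at h
      have hpq : p.1.1 = q.1.1 := le_antisymm (p.2.fst_le_of_sigSum_eq q.2.1 h)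
        (q.2.fst_le_of_sigSum_eq p.2.1 h.symm)
      obtain ⟨hpq, hl⟩ := sigSum_inj h hpq
      rw [Subtype.ext hpq, ih hl]

noncomputable def blockEquiv : List Indec ≃ PermSig :=
  Equiv.ofBijective blockSum ⟨blockSum_injective, blockSum_surjective⟩

theorem isBlockDecomposition_iff {n : ℕ} {π : Perm (Fin n)} {l : List Indec} :
    IsBlockDecomposition π l ↔ l = blockEquiv.symm ⟨n, π⟩ :=
  blockEquiv.eq_symm_apply.symm

theorem sigSumList_eq_blockEquiv_flatten (L : List PermSig) :
    sigSumList L = blockEquiv (L.map blockEquiv.symm).flatten := by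
  change _ = blockSum _
  rw [blockSum_flatten, List.map_map,
    show blockSum ∘ blockEquiv.symm = id from blockEquiv.self_comp_symm, List.map_id]

theorem permWord_injective {n : ℕ} : Function.Injective (permWord (n := n)) := fun _ _ h =>
  Equiv.ext fun i => Fin.ext (List.map_inj_left.mp h i (List.mem_finRange i))

instance : LinearOrder Indec :=
  LinearOrder.lift' (fun p => toLex (p.1.1, permWord p.1.2)) fun ⟨⟨m, σ⟩, _⟩ ⟨⟨n, τ⟩, _⟩ h => by
    obtain ⟨rfl, h⟩ := Prod.mk.inj (toLex.injective h)
    obtain rfl := permWord_injective h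
    rfl

theorem indecLt_eq_lt : indecLt = ((· < ·) : Indec → Indec → Prop) := by
  ext p q
  exact (Prod.Lex.toLex_lt_toLex (x := (p.1.1, permWord p.1.2)) (y := (q.1.1, permWord q.1.2))).symm

theorem isLyndonPerm_iff {n : ℕ} (π : Perm (Fin n)) :
    IsLyndonPerm π ↔ IsLyndonWord (· < ·) (blockEquiv.symm ⟨n, π⟩) := by
  simp [IsLyndonPerm, IsLyndonPermWrt, isBlockDecomposition_iff, indecLt_eq_lt]

theorem permLeL_iff (p q : PermSig) : permLeL p q ↔ blockEquiv.symm p ≤ blockEquiv.symm q := by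
  simp [permLeL, isBlockDecomposition_iff, indecLt_eq_lt, le_iff_eq_or_lt]

theorem lyndon_factorization_of_permutation_general (N : ℕ)
    (π : Equiv.Perm (Fin N)) :
    ∃! L : List PermSig,
      (∀ p ∈ L, IsLyndonPerm p.2) ∧
      L.Chain' (fun p q => permLeL q p) ∧
      sigSumList L = ⟨N, π⟩ := by
  refine ((Equiv.listEquivOfEquiv blockEquiv.symm).existsUnique_congr fun L => ?_).mpr
    (existsUnique_isLyndonFactorization (blockEquiv.symm ⟨N, π⟩))
  simp only [IsLyndonFactorization, Equiv.listEquivOfEquiv, Equiv.coe_fn_mk, List.forall_mem_map,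
    List.isChain_map, isLyndonPerm_iff, permLeL_iff, sigSumList_eq_blockEquiv_flatten,
    ← Equiv.eq_symm_apply, and_assoc]
  exact Iff.rfl

/-- Every permutation of size at least `1` is uniquely a direct sum
`π₁ ⊕ ⋯ ⊕ πₙ` of Lyndon permutations with `π₁ ≥_L π₂ ≥_L ⋯ ≥_L πₙ`. -/
theorem lyndon_factorization_of_permutation (N : ℕ) (hN : 1 ≤ N)
    (π : Equiv.Perm (Fin N)) :
    ∃! L : List PermSig,
      (∀ p ∈ L, IsLyndonPerm p.2) ∧
      L.Chain' (fun p q => permLeL q p) ∧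
      sigSumList L = ⟨N, π⟩ :=
  lyndon_factorization_of_permutation_general N π
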